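/- In a C-space (X, S) with specialization preorder Q, every compact saturated set is closed in the weak lower topology υQ̃ (generated by complements of principal filters ↑x); consequently the cocompact topology of S equals the weak lower topology of Q. -/

import Mathlib

/-- The specialization preorder: x ≤ y iff every open set containing x contains y. -/
def sle {X : Type*} [TopologicalSpace X] (x y : X) : Prop :=
  ∀ U : Set X, IsOpen U → x ∈ U → y ∈ U

/-- The core of a point. -/
def core {X : Type*} [TopologicalSpace X] (x : X) : Set X := {y | sle x y}

/-- The weak lower topology of the specialization preorder: generated by the
complements of principal filters (cores). -/
def weakLower (X : Type*) [TopologicalSpace X] : TopologicalSpace X :=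
  TopologicalSpace.generateFrom {U : Set X | ∃ x : X, U = (core x)ᶜ}

/-!
The point is that in a C-space the cores `↑u` with `x ∈ int ↑u` form a neighbourhood base
at `x`. If `K` is compact saturated and `y ∉ K`, then for each `a ∈ K` we have `a ≰ y`, so some
core `↑u` is a neighbourhood of `a` missing `y`. Finitely many of these cover `K`, and the
intersection of their complements is a weak-lower neighbourhood of `y` disjoint from `K`.
Conversely each `↑x` is itself compact and saturated, so the two topologies agree.
-/

open Filter Topology TopologicalSpace

section

variable {X : Type*} [TopologicalSpace X]

def IsCSpace (X : Type*) [TopologicalSpace X] : Prop :=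
  ∀ (x : X) (U : Set X), IsOpen U → x ∈ U → ∃ u : X, x ∈ interior (core u) ∧ core u ⊆ U

def IsSaturated (K : Set X) : Prop :=
  ∀ a ∈ K, ∀ b, sle a b → b ∈ K

lemma sle_refl (x : X) : sle x x := fun _ _ hx => hx

lemma sle_trans {x y z : X} (hxy : sle x y) (hyz : sle y z) : sle x z :=
  fun U hU hx => hyz U hU (hxy U hU hx)

lemma isSaturated_core (x : X) : IsSaturated (core x) :=
  fun _ ha _ hab => sle_trans ha hab

lemma isCompact_core (x : X) : IsCompact (core x) := by
  refine isCompact_of_finite_subcover fun U hU hcover => ?_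
  obtain ⟨i, hxi⟩ := Set.mem_iUnion.1 (hcover (sle_refl x))
  exact ⟨{i}, fun y hy => Set.mem_biUnion (Finset.mem_singleton_self i) (hy (U i) (hU i) hxi)⟩

lemma isOpen_weakLower_compl_core (x : X) : IsOpen[weakLower X] (core x)ᶜ :=
  GenerateOpen.basic _ ⟨x, rfl⟩

lemma IsCSpace.exists_core_mem_nhds_notMem (hC : IsCSpace X) {a y : X} (hay : ¬ sle a y) :
    ∃ u, core u ∈ 𝓝 a ∧ y ∉ core u := by
  obtain ⟨U, hU, haU, hyU⟩ : ∃ U, IsOpen U ∧ a ∈ U ∧ y ∉ U := by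
    simpa only [sle, not_forall, exists_prop] using hay
  obtain ⟨u, hau, huU⟩ := hC a U hU haU
  exact ⟨u, mem_interior_iff_mem_nhds.1 hau, fun hy => hyU (huU hy)⟩

lemma IsCSpace.isClosed_weakLower (hC : IsCSpace X) {K : Set X} (hK : IsCompact K)
    (hsat : IsSaturated K) : IsClosed[weakLower X] K := by
  suffices h : ∀ y ∈ Kᶜ, ∃ V, V ⊆ Kᶜ ∧ IsOpen[weakLower X] V ∧ y ∈ V by
    let := weakLower X
    exact isOpen_compl_iff.1 (isOpen_iff_forall_mem_open.2 h)
  intro y hy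
  choose! u hu_nhds hu_y using fun a (ha : a ∈ K) =>
    hC.exists_core_mem_nhds_notMem fun hay => hy (hsat a ha y hay)
  obtain ⟨t, htK, hKt⟩ := hK.elim_nhds_subcover (fun a => core (u a)) hu_nhds
  refine ⟨⋂ a ∈ t, (core (u a))ᶜ, fun z hz hzK => ?_, ?_, ?_⟩
  · obtain ⟨a, hat, hza⟩ := Set.mem_iUnion₂.1 (hKt hzK)
    exact Set.mem_iInter₂.1 hz a hat hza
  · exact @isOpen_biInter_finset X _ (weakLower X) t _ fun a _ => isOpen_weakLower_compl_core _
  · exact Set.mem_iInter₂.2 fun a hat => hu_y a (htK a hat)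

lemma IsCSpace.generateFrom_compl_isCompact_isSaturated (hC : IsCSpace X) :
    generateFrom {U : Set X | ∃ K : Set X, IsCompact K ∧ IsSaturated K ∧ U = Kᶜ} = weakLower X :=
  le_antisymm
    (generateFrom_anti fun _ ⟨x, hU⟩ => ⟨core x, isCompact_core x, isSaturated_core x, hU⟩)
    (le_generateFrom fun _ ⟨_, hK, hsat, hU⟩ => hU ▸ (hC.isClosed_weakLower hK hsat).isOpen_compl)

end

/-- In a C-space, every compact saturated set is closed in the
weak lower topology; consequently the cocompact topology equals the weak lower
topology of the specialization preorder. -/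
theorem stmt_13 {X : Type*} [TopologicalSpace X]
    (hC : ∀ (x : X) (U : Set X), IsOpen U → x ∈ U →
      ∃ u : X, x ∈ interior (core u) ∧ core u ⊆ U) :
    (∀ K : Set X, IsCompact K → (∀ a ∈ K, ∀ b, sle a b → b ∈ K) →
      @IsClosed X (weakLower X) K) ∧
    TopologicalSpace.generateFrom
        {U : Set X | ∃ K : Set X, IsCompact K ∧ (∀ a ∈ K, ∀ b, sle a b → b ∈ K) ∧ U = Kᶜ}
      = weakLower X :=
  ⟨fun _ hK hsat => IsCSpace.isClosed_weakLower hC hK hsat,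
    IsCSpace.generateFrom_compl_isCompact_isSaturated hC⟩
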